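/- arXiv:2603.22188 — 3 statements merged into one kernel-verified Lean document; each statement's English description precedes it below -/
import Mathlib

section
/- Fix r > 1 and an r-region plan ξ_r of G. The map that sends an unordered pair of adjacent regions {G_k, G_{k'}} ∈ AR(ξ_r) to the (r−1)-region plan obtained from ξ_r by replacing the blocks V_k and V_{k'} with V_k ∪ V_{k'} is well defined (the merged block V_k ∪ V_{k'} induces a connected subgraph of G) and is a bijection from AR(ξ_r) onto A₁(ξ_r). -/
open SimpleGraph

namespace Redist

variable {V : Type*} [Fintype V] [DecidableEq V]

/-- The subgraph of `G` induced by the vertex set `s` (the graph `G[s]`). -/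
abbrev ind (G : SimpleGraph V) (s : Set V) : G.Subgraph :=
  (⊤ : G.Subgraph).induce s

/-- `T` is a spanning tree of the subgraph `H` of `G`. -/
def IsSpanningTreeOf (G : SimpleGraph V) (T H : G.Subgraph) : Prop :=
  T ≤ H ∧ T.verts = H.verts ∧ T.coe.IsTree

/-- `τ H`: the number of spanning trees of the subgraph `H`. -/
noncomputable def tau (G : SimpleGraph V) (H : G.Subgraph) : ℕ :=
  {T : G.Subgraph | IsSpanningTreeOf G T H}.ncard

/-- `C(s, t)`: the set of edges of `G` with one endpoint in `s` and the other in `t`. -/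
def crossEdges (G : SimpleGraph V) (s t : Set V) : Set (Sym2 V) :=
  {e | e ∈ G.edgeSet ∧ ∃ u v : V, e = s(u, v) ∧ u ∈ s ∧ v ∈ t}

/-- The subgraph obtained from `H` by adding the edges in `E'` (that are edges of `G`). -/
def withEdges (G : SimpleGraph V) (H : G.Subgraph) (E' : Set (Sym2 V)) : G.Subgraph where
  verts := H.verts ∪ {v | ∃ e ∈ E' ∩ G.edgeSet, v ∈ e}
  Adj u v := H.Adj u v ∨ (s(u, v) ∈ E' ∧ G.Adj u v)
  adj_sub := by
    rintro u v (h | ⟨-, h⟩)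
    · exact H.adj_sub h
    · exact h
  edge_vert := by
    rintro u v (h | ⟨h, hG⟩)
    · exact Or.inl (H.edge_vert h)
    · exact Or.inr ⟨s(u, v), ⟨h, hG⟩, Sym2.mem_mk_left u v⟩
  symm := by
    constructor
    rintro u v (h | ⟨h, hG⟩)
    · exact Or.inl (H.adj_symm h)
    · exact Or.inr ⟨by rwa [Sym2.eq_swap], hG.symm⟩

/-- A plan with `r` regions: a partition of the vertex set into `r` nonempty blocks,
each inducing a connected subgraph. -/
structure Plan (G : SimpleGraph V) (r : ℕ) where
  blocks : Set (Set V)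
  ncard_blocks : blocks.ncard = r
  blocks_nonempty : ∀ B ∈ blocks, B.Nonempty
  blocks_disjoint : ∀ B ∈ blocks, ∀ B' ∈ blocks, B ≠ B' → Disjoint B B'
  blocks_cover : ∀ v : V, ∃ B ∈ blocks, v ∈ B
  blocks_connected : ∀ B ∈ blocks, (ind G B).Connected

/-- `ξp` is a 1-region ancestor of `ξr`: exactly one region of `ξp` is not a region of `ξr`. -/
def IsAncestor (G : SimpleGraph V) {r : ℕ} (ξp : Plan G (r - 1)) (ξr : Plan G r) : Prop :=
  (ξp.blocks \ ξr.blocks).ncard = 1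

/-- An `r`-region forest plan: `r` vertex-disjoint trees covering all of `V`. -/
structure ForestPlan (G : SimpleGraph V) (r : ℕ) where
  trees : Set G.Subgraph
  ncard_trees : trees.ncard = r
  isTree : ∀ T ∈ trees, T.coe.IsTree
  trees_disjoint : ∀ T ∈ trees, ∀ T' ∈ trees, T ≠ T' → Disjoint T.verts T'.verts
  trees_cover : ∀ v : V, ∃ T ∈ trees, v ∈ T.verts

/-- The induced plan of a forest plan (as a family of blocks). -/
def forestBlocks (G : SimpleGraph V) {r : ℕ} (F : ForestPlan G r) : Set (Set V) :=
  Subgraph.verts '' F.trees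

/-- `Fp` is a 1-region tree ancestor of `Fr`. -/
def ForestAncestor (G : SimpleGraph V) {r : ℕ} (Fp : ForestPlan G (r - 1))
    (Fr : ForestPlan G r) : Prop :=
  (Fp.trees \ Fr.trees).ncard = 1

variable {A : Type*}

/-- The set of administrative units meeting the vertex set `s`. -/
def unitSet (η : V → A) (s : Set V) : Set A := {a | (s ∩ η ⁻¹' {a}).Nonempty}

/-- A block is hierarchically connected: its intersection with each administrative unit has
at most one connected component. -/
def HierConnectedBlock (G : SimpleGraph V) (η : V → A) (B : Set V) : Prop :=
  ∀ a : A, (ind G (B ∩ η ⁻¹' {a})).coe.Preconnected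

/-- `T` is an `η`-hierarchical tree on the region induced by `B`. -/
def IsHierTree (G : SimpleGraph V) (η : V → A) (T : G.Subgraph) (B : Set V) : Prop :=
  IsSpanningTreeOf G T (ind G B) ∧
    ∀ a : A, (B ∩ η ⁻¹' {a}).Nonempty →
      IsSpanningTreeOf G (T.induce (B ∩ η ⁻¹' {a})) (ind G (B ∩ η ⁻¹' {a}))

/-- Two blocks are administratively adjacent. -/
def AdminAdj (G : SimpleGraph V) (η : V → A) (B B' : Set V) : Prop :=
  ∃ a : A, ∃ u v : V, G.Adj u v ∧ u ∈ B ∩ η ⁻¹' {a} ∧ v ∈ B' ∩ η ⁻¹' {a}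

/-- `S` is (the set of regions of) a connected component of the administrative adjacency
graph of the plan with blocks `blocks`. -/
def IsAdminComponent (G : SimpleGraph V) (η : V → A) (blocks S : Set (Set V)) : Prop :=
  S ⊆ blocks ∧ S.Nonempty ∧
    (∀ B ∈ S, ∀ B' ∈ S,
      Relation.ReflTransGen (fun X Y => X ∈ S ∧ Y ∈ S ∧ AdminAdj G η X Y) B B') ∧
    ∀ B ∈ S, ∀ B' ∈ blocks, B' ∉ S → ¬AdminAdj G η B B'

/-- The number of connected components of the subgraph induced by `s`. -/
noncomputable def numComponents (G : SimpleGraph V) (s : Set V) : ℕ :=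
  Nat.card ((ind G s).coe.ConnectedComponent)

/-- The number of administrative splits of a family `S` of blocks. -/
noncomputable def splits [Fintype A] (G : SimpleGraph V) (η : V → A) (S : Set (Set V)) : ℕ :=
  (∑ᶠ a : A, ∑ᶠ B ∈ S, numComponents G (B ∩ η ⁻¹' {a})) -
    {a : A | ∃ B ∈ S, (B ∩ η ⁻¹' {a}).Nonempty}.ncard

/-- `T` is a hierarchical plan tree for the plan with blocks `blocks`. -/
def IsHierPlanTree (G : SimpleGraph V) (η : V → A) (T : G.Subgraph)
    (blocks : Set (Set V)) : Prop :=
  IsHierTree G η T Set.univ ∧ ∀ B ∈ blocks, IsHierTree G η (T.induce B) B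

/-- The plan with blocks `blocks` is hierarchical. -/
def IsHierPlanBlocks (G : SimpleGraph V) (η : V → A) (blocks : Set (Set V)) : Prop :=
  ∃ T : G.Subgraph, IsHierPlanTree G η T blocks

/-- The effective region tree boundary length between two vertex-disjoint trees. -/
noncomputable def EffB (G : SimpleGraph V) (p : G.Subgraph → Sym2 V → ℝ)
    (Tk Tk' : G.Subgraph) : ℝ :=
  ∑ᶠ e ∈ crossEdges G Tk.verts Tk'.verts, p (withEdges G (Tk ⊔ Tk') {e}) e

end Redist

/-!
Merging two adjacent regions keeps every block connected, and the merged block is new because the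
blocks of a partition are disjoint and nonempty; removing the blocks of the merged plan from those
of `ξ` therefore recovers the merged pair, which gives injectivity. Conversely, when two partitions
of `V` are compared, the blocks one of them loses cover exactly the blocks it gains. A 1-region
ancestor gains one block and, by counting, loses two, so the gained block is the union of the two
lost ones, and its connectivity forces an edge between them.
-/

namespace Set

variable {α : Type*} {s t : Set α} {u : α}

theorem sdiff_union_singleton_sdiff_self (hu : u ∉ s) : (s \ t ∪ {u}) \ s = {u} := by
  ext x
  constructor
  · rintro ⟨⟨hxs, -⟩ | hx, hxs'⟩
    exacts [absurd hxs hxs', hx]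
  · rintro rfl
    exact ⟨Or.inr rfl, hu⟩

theorem sdiff_sdiff_union_singleton (ht : t ⊆ s) (hu : u ∉ s) : s \ (s \ t ∪ {u}) = t := by
  ext x
  constructor
  · rintro ⟨hxs, hx⟩
    by_contra hxt
    exact hx (Or.inl ⟨hxs, hxt⟩)
  · intro hxt
    refine ⟨ht hxt, ?_⟩
    rintro (⟨-, hx⟩ | rfl)
    exacts [hx hxt, hu (ht hxt)]

theorem ncard_sdiff_union_singleton [Finite α] (ht : t ⊆ s) (hu : u ∉ s) :
    (s \ t ∪ {u}).ncard = s.ncard - t.ncard + 1 := by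
  rw [ncard_union_eq (disjoint_singleton_right.mpr fun h ↦ hu h.1), ncard_sdiff ht,
    ncard_singleton]

theorem eq_sdiff_sdiff_union_sdiff (s t : Set α) : t = s \ (s \ t) ∪ t \ s := by
  rw [sdiff_sdiff_right_self, inter_comm, inter_union_sdiff]

end Set

namespace Redist

variable {V : Type*} {G : SimpleGraph V} {B B' : Set V}

theorem crossEdges_nonempty_iff :
    (crossEdges G B B').Nonempty ↔ ∃ u ∈ B, ∃ v ∈ B', G.Adj u v := by
  constructor
  · rintro ⟨-, hadj, u, v, rfl, hu, hv⟩
    exact ⟨u, hu, v, hv, hadj⟩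
  · rintro ⟨u, hu, v, hv, hadj⟩
    exact ⟨s(u, v), hadj, u, v, rfl, hu, hv⟩

theorem ind_union_connected (hB : (ind G B).Connected) (hB' : (ind G B').Connected)
    (hcross : (crossEdges G B B').Nonempty) : (ind G (B ∪ B')).Connected := by
  obtain ⟨u, hu, v, hv, huv⟩ := crossEdges_nonempty_iff.mp hcross
  rw [← connected_induce_iff] at hB hB' ⊢
  exact connected_induce_union hB.preconnected hB'.preconnected hu hv huv

/-- A walk inside `B ∪ B'` from `B` to `B'` has to leave `B` along some edge. -/
theorem crossEdges_nonempty_of_ind_union_connected (hdisj : Disjoint B B')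
    (hB : B.Nonempty) (hB' : B'.Nonempty) (hconn : (ind G (B ∪ B')).Connected) :
    (crossEdges G B B').Nonempty := by
  obtain ⟨u, hu⟩ := hB
  obtain ⟨v, hv⟩ := hB'
  rw [← connected_induce_iff] at hconn
  obtain ⟨p⟩ := hconn.preconnected ⟨u, Or.inl hu⟩ ⟨v, Or.inr hv⟩
  obtain ⟨d, -, hd, hd'⟩ :=
    p.exists_boundary_dart (Subtype.val ⁻¹' B) hu (hdisj.notMem_of_mem_right hv)
  have hd'B' : (d.snd : V) ∈ B' := d.snd.2.resolve_left hd'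
  exact crossEdges_nonempty_iff.mpr ⟨_, hd, _, hd'B', d.adj⟩

namespace Plan

variable {r r' : ℕ}

theorem ext_blocks {ξ ξ' : Plan G r} (h : ξ.blocks = ξ'.blocks) : ξ = ξ' := by
  cases ξ
  cases ξ'
  cases h
  rfl

theorem eq_of_mem_of_mem (ξ : Plan G r) {C : Set V} {x : V} (hB : B ∈ ξ.blocks)
    (hC : C ∈ ξ.blocks) (hxB : x ∈ B) (hxC : x ∈ C) : B = C := by
  by_contra hne
  exact (ξ.blocks_disjoint B hB C hC hne).notMem_of_mem_left hxB hxC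

theorem union_notMem (ξ : Plan G r) (hB : B ∈ ξ.blocks) (hB' : B' ∈ ξ.blocks) (hne : B ≠ B') :
    B ∪ B' ∉ ξ.blocks := by
  intro hU
  obtain ⟨x, hx⟩ := ξ.blocks_nonempty B hB
  obtain ⟨y, hy⟩ := ξ.blocks_nonempty B' hB'
  exact hne ((ξ.eq_of_mem_of_mem hU hB (Or.inl hx) hx).symm.trans
    (ξ.eq_of_mem_of_mem hU hB' (Or.inr hy) hy))

theorem sUnion_sdiff_blocks_subset (ξ : Plan G r) (ξ' : Plan G r') :
    ⋃₀ (ξ.blocks \ ξ'.blocks) ⊆ ⋃₀ (ξ'.blocks \ ξ.blocks) := by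
  rintro x ⟨B, ⟨hB, hB'⟩, hxB⟩
  obtain ⟨C, hC, hxC⟩ := ξ'.blocks_cover x
  refine ⟨C, ⟨hC, fun hCξ ↦ hB' ?_⟩, hxC⟩
  rwa [ξ.eq_of_mem_of_mem hB hCξ hxB hxC]

theorem sUnion_sdiff_blocks_eq (ξ : Plan G r) (ξ' : Plan G r') :
    ⋃₀ (ξ.blocks \ ξ'.blocks) = ⋃₀ (ξ'.blocks \ ξ.blocks) :=
  (ξ.sUnion_sdiff_blocks_subset ξ').antisymm (ξ'.sUnion_sdiff_blocks_subset ξ)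

def merge [Finite V] (ξ : Plan G r) (hB : B ∈ ξ.blocks) (hB' : B' ∈ ξ.blocks) (hne : B ≠ B')
    (hconn : (ind G (B ∪ B')).Connected) : Plan G (r - 1) where
  blocks := ξ.blocks \ {B, B'} ∪ {B ∪ B'}
  ncard_blocks := by
    have hpair : {B, B'} ⊆ ξ.blocks := Set.pair_subset hB hB'
    have htwo : 2 ≤ r := ξ.ncard_blocks ▸ Set.ncard_pair hne ▸ Set.ncard_le_ncard hpair
    rw [Set.ncard_sdiff_union_singleton hpair (ξ.union_notMem hB hB' hne), ξ.ncard_blocks,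
      Set.ncard_pair hne]
    omega
  blocks_nonempty := by
    rintro C (⟨hC, -⟩ | rfl)
    exacts [ξ.blocks_nonempty C hC, (ξ.blocks_nonempty B hB).mono Set.subset_union_left]
  blocks_disjoint := by
    have hdisj_merged : ∀ C ∈ ξ.blocks \ {B, B'}, Disjoint C (B ∪ B') := by
      rintro C ⟨hC, hCB⟩
      simp only [Set.mem_insert_iff, Set.mem_singleton_iff, not_or] at hCB
      exact Set.disjoint_union_right.mpr
        ⟨ξ.blocks_disjoint C hC B hB hCB.1, ξ.blocks_disjoint C hC B' hB' hCB.2⟩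
    rintro C (hC | rfl) C' (hC' | rfl) hCC'
    · exact ξ.blocks_disjoint C hC.1 C' hC'.1 hCC'
    · exact hdisj_merged C hC
    · exact (hdisj_merged C' hC').symm
    · exact absurd rfl hCC'
  blocks_cover x := by
    obtain ⟨C, hC, hxC⟩ := ξ.blocks_cover x
    by_cases hCB : C = B ∨ C = B'
    · refine ⟨B ∪ B', Or.inr rfl, ?_⟩
      rcases hCB with rfl | rfl
      exacts [Or.inl hxC, Or.inr hxC]
    · exact ⟨C, Or.inl ⟨hC, hCB⟩, hxC⟩
  blocks_connected := by
    rintro C (⟨hC, -⟩ | rfl)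
    exacts [ξ.blocks_connected C hC, hconn]

theorem merge_isAncestor [Finite V] (ξ : Plan G r) (hB : B ∈ ξ.blocks) (hB' : B' ∈ ξ.blocks)
    (hne : B ≠ B') (hconn : (ind G (B ∪ B')).Connected) :
    IsAncestor G (ξ.merge hB hB' hne hconn) ξ := by
  rw [IsAncestor, merge, Set.sdiff_union_singleton_sdiff_self (ξ.union_notMem hB hB' hne),
    Set.ncard_singleton]

theorem blocks_sdiff_merged (ξ : Plan G r) (hB : B ∈ ξ.blocks) (hB' : B' ∈ ξ.blocks)
    (hne : B ≠ B') : ξ.blocks \ (ξ.blocks \ {B, B'} ∪ {B ∪ B'}) = {B, B'} :=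
  Set.sdiff_sdiff_union_singleton (Set.pair_subset hB hB') (ξ.union_notMem hB hB' hne)

theorem exists_eq_merged_of_isAncestor [Finite V] (ξ : Plan G r) (ξp : Plan G (r - 1))
    (hanc : IsAncestor G ξp ξ) :
    ∃ B ∈ ξ.blocks, ∃ B' ∈ ξ.blocks, B ≠ B' ∧ (crossEdges G B B').Nonempty ∧
      ξp.blocks = ξ.blocks \ {B, B'} ∪ {B ∪ B'} := by
  obtain ⟨D, hD⟩ := Set.ncard_eq_one.mp hanc
  have hlost : (ξ.blocks \ ξp.blocks).ncard = 2 := by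
    have hgain := Set.ncard_sdiff_add_ncard ξp.blocks ξ.blocks
    have hloss := Set.ncard_sdiff_add_ncard ξ.blocks ξp.blocks
    have hle := Set.ncard_le_ncard (Set.sdiff_subset (s := ξp.blocks) (t := ξ.blocks))
    simp only [IsAncestor] at hanc
    simp only [hanc, ξ.ncard_blocks, ξp.ncard_blocks, Set.union_comm ξ.blocks] at hgain hloss hle
    omega
  obtain ⟨B, B', hne, hpair⟩ := Set.ncard_eq_two.mp hlost
  have hB : B ∈ ξ.blocks \ ξp.blocks := hpair ▸ Set.mem_insert B {B'}
  have hB' : B' ∈ ξ.blocks \ ξp.blocks := hpair ▸ Set.mem_insert_of_mem B rfl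
  have hD_mem : D ∈ ξp.blocks := (hD ▸ Set.mem_singleton D : D ∈ ξp.blocks \ ξ.blocks).1
  have hD_eq : D = B ∪ B' := by
    simpa only [hD, hpair, Set.sUnion_singleton, Set.sUnion_pair] using
      ξp.sUnion_sdiff_blocks_eq ξ
  have hconn : (ind G (B ∪ B')).Connected := hD_eq ▸ ξp.blocks_connected D hD_mem
  refine ⟨B, hB.1, B', hB'.1, hne, ?_, ?_⟩
  · exact crossEdges_nonempty_of_ind_union_connected (ξ.blocks_disjoint B hB.1 B' hB'.1 hne)
      (ξ.blocks_nonempty B hB.1) (ξ.blocks_nonempty B' hB'.1) hconn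
  · rw [Set.eq_sdiff_sdiff_union_sdiff ξ.blocks ξp.blocks, hpair, hD, hD_eq]

end Plan

variable [Fintype V] [DecidableEq V]

theorem stmt_6_general (G : SimpleGraph V) (r : ℕ) (ξr : Plan G r) :
    (∀ Bk ∈ ξr.blocks, ∀ Bk' ∈ ξr.blocks, Bk ≠ Bk' → (crossEdges G Bk Bk').Nonempty →
      (ind G (Bk ∪ Bk')).Connected ∧
      ∃! ξp : Plan G (r - 1), IsAncestor G ξp ξr ∧
        ξp.blocks = (ξr.blocks \ {Bk, Bk'}) ∪ {Bk ∪ Bk'}) ∧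
    (∀ Bk ∈ ξr.blocks, ∀ Bk' ∈ ξr.blocks, ∀ Ck ∈ ξr.blocks, ∀ Ck' ∈ ξr.blocks,
      Bk ≠ Bk' → Ck ≠ Ck' →
      (crossEdges G Bk Bk').Nonempty → (crossEdges G Ck Ck').Nonempty →
      (ξr.blocks \ {Bk, Bk'}) ∪ {Bk ∪ Bk'} = (ξr.blocks \ {Ck, Ck'}) ∪ {Ck ∪ Ck'} →
      ({Bk, Bk'} : Set (Set V)) = {Ck, Ck'}) ∧
    (∀ ξp : Plan G (r - 1), IsAncestor G ξp ξr →
      ∃ Bk ∈ ξr.blocks, ∃ Bk' ∈ ξr.blocks, Bk ≠ Bk' ∧ (crossEdges G Bk Bk').Nonempty ∧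
        ξp.blocks = (ξr.blocks \ {Bk, Bk'}) ∪ {Bk ∪ Bk'}) := by
  refine ⟨fun Bk hBk Bk' hBk' hne hcross ↦ ?_, ?_, ξr.exists_eq_merged_of_isAncestor⟩
  · have hconn := ind_union_connected (ξr.blocks_connected Bk hBk)
      (ξr.blocks_connected Bk' hBk') hcross
    exact ⟨hconn, ξr.merge hBk hBk' hne hconn, ⟨ξr.merge_isAncestor hBk hBk' hne hconn, rfl⟩,
      fun ξp hξp ↦ Plan.ext_blocks hξp.2⟩
  · intro Bk hBk Bk' hBk' Ck hCk Ck' hCk' hneB hneC _ _ hmerged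
    rw [← ξr.blocks_sdiff_merged hBk hBk' hneB, hmerged, ξr.blocks_sdiff_merged hCk hCk' hneC]

/-- Merging an unordered pair of adjacent regions of `ξr` yields a
well-defined element of `A₁(ξr)` (the merged block induces a connected subgraph), and
this map is a bijection from `AR(ξr)` onto `A₁(ξr)` (stated as: well-definedness with
unique resulting plan, injectivity, and surjectivity). -/
theorem stmt_6 (G : SimpleGraph V) (r : ℕ) (hr : 1 < r) (ξr : Plan G r) :
    (∀ Bk ∈ ξr.blocks, ∀ Bk' ∈ ξr.blocks, Bk ≠ Bk' → (crossEdges G Bk Bk').Nonempty →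
      (ind G (Bk ∪ Bk')).Connected ∧
      ∃! ξp : Plan G (r - 1), IsAncestor G ξp ξr ∧
        ξp.blocks = (ξr.blocks \ {Bk, Bk'}) ∪ {Bk ∪ Bk'}) ∧
    (∀ Bk ∈ ξr.blocks, ∀ Bk' ∈ ξr.blocks, ∀ Ck ∈ ξr.blocks, ∀ Ck' ∈ ξr.blocks,
      Bk ≠ Bk' → Ck ≠ Ck' →
      (crossEdges G Bk Bk').Nonempty → (crossEdges G Ck Ck').Nonempty →
      (ξr.blocks \ {Bk, Bk'}) ∪ {Bk ∪ Bk'} = (ξr.blocks \ {Ck, Ck'}) ∪ {Ck ∪ Ck'} →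
      ({Bk, Bk'} : Set (Set V)) = {Ck, Ck'}) ∧
    (∀ ξp : Plan G (r - 1), IsAncestor G ξp ξr →
      ∃ Bk ∈ ξr.blocks, ∃ Bk' ∈ ξr.blocks, Bk ≠ Bk' ∧ (crossEdges G Bk Bk').Nonempty ∧
        ξp.blocks = (ξr.blocks \ {Bk, Bk'}) ∪ {Bk ∪ Bk'}) :=
  stmt_6_general G r ξr

end Redist
end

section
/- Fix r > 1 and an r-region forest plan F_r of G. Call two trees T_k, T_{k'} ∈ F_r adjacent if C(T_k, T_{k'}) ≠ ∅. Then the map sending F_{r-1} ∈ A₁(F_r) to its old tree is a bijection from A₁(F_r) onto the set of trees T_ℓ such that, for some unordered pair of adjacent trees {T_k, T_{k'}} of F_r, T_ℓ is a spanning tree of G[V(T_k) ∪ V(T_{k'})]. In particular, for each unordered pair of adjacent trees {T_k, T_{k'}} of F_r there are exactly τ(G[V(T_k) ∪ V(T_{k'})]) elements of A₁(F_r) whose old tree has vertex set V(T_k) ∪ V(T_{k'}). -/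
open SimpleGraph

/-! If an `(r - 1)`-tree forest plan `F'` has exactly one tree `T` outside the `r`-tree plan `F`,
counting shows that exactly two trees of `F` lie outside `F'`; since both families partition `V`,
`V(T)` is the union of their vertex sets and the other trees of `F'` are exactly the trees of `F`
disjoint from `T`. Hence an ancestor is determined by its old tree, and conversely replacing two
trees of `F` by a spanning tree of the union of their vertex sets gives an ancestor. The two merged
trees are adjacent because the old tree is connected. -/

namespace Redist

variable {V : Type*} {G : SimpleGraph V}

lemma isSpanningTreeOf_ind_iff {T : G.Subgraph} {s : Set V} :
    IsSpanningTreeOf G T (ind G s) ↔ T.verts = s ∧ T.coe.IsTree := by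
  refine ⟨fun h => ⟨by simpa using h.2.1, h.2.2⟩,
    fun ⟨hv, ht⟩ => ⟨⟨by simp [hv], ?_⟩, by simp [hv], ht⟩⟩
  intro u v h
  exact ⟨hv ▸ T.edge_vert h, hv ▸ T.edge_vert h.symm, T.adj_sub h⟩

lemma crossEdges_nonempty_of_preconnected {H : G.Subgraph} (hH : H.coe.Preconnected)
    {s t : Set V} (hst : H.verts ⊆ s ∪ t) {a b : V} (ha : a ∈ H.verts) (has : a ∈ s)
    (hb : b ∈ H.verts) (hbs : b ∉ s) : (crossEdges G s t).Nonempty := by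
  obtain ⟨p⟩ := hH ⟨a, ha⟩ ⟨b, hb⟩
  obtain ⟨d, -, hd₁, hd₂⟩ := p.exists_boundary_dart {x | (x : V) ∈ s} has hbs
  have hd₂t : (d.snd : V) ∈ t := (hst d.snd.2).resolve_left hd₂
  exact ⟨s(d.fst, d.snd), G.mem_edgeSet.2 (H.adj_sub d.adj), _, _, rfl, hd₁, hd₂t⟩

namespace ForestPlan

variable {r s : ℕ}

lemma ext {F F' : ForestPlan G r} (h : F.trees = F'.trees) : F = F' := by
  cases F; cases F'; cases h; rfl

lemma verts_nonempty (F : ForestPlan G r) {T : G.Subgraph} (hT : T ∈ F.trees) :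
    T.verts.Nonempty :=
  Set.nonempty_coe_sort.mp (F.isTree T hT).connected.nonempty

lemma eq_of_mem_verts (F : ForestPlan G r) {T T' : G.Subgraph} (hT : T ∈ F.trees)
    (hT' : T' ∈ F.trees) {v : V} (hv : v ∈ T.verts) (hv' : v ∈ T'.verts) : T = T' := by
  by_contra hne
  exact Set.disjoint_left.mp (F.trees_disjoint T hT T' hT' hne) hv hv'

section OneNewTree

variable {F : ForestPlan G r} {F' : ForestPlan G s} {Tl : G.Subgraph}
  (hd : F'.trees \ F.trees = {Tl})
include hd

lemma mem_trees_iff_disjoint {T : G.Subgraph} (hT : T ∈ F.trees) :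
    T ∈ F'.trees ↔ Disjoint T.verts Tl.verts := by
  have hTl : Tl ∈ F'.trees \ F.trees := hd ▸ rfl
  constructor
  · intro hT'
    exact F'.trees_disjoint T hT' Tl hTl.1 (ne_of_mem_of_not_mem hT hTl.2)
  · intro hdisj
    obtain ⟨v, hv⟩ := F.verts_nonempty hT
    obtain ⟨T', hT', hvT'⟩ := F'.trees_cover v
    have hT'F : T' ∈ F.trees := by
      by_contra hT'F
      have hT'l : T' = Tl := by
        rw [← Set.mem_singleton_iff, ← hd]
        exact ⟨hT', hT'F⟩
      exact Set.disjoint_left.mp hdisj hv (hT'l ▸ hvT')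
    exact F.eq_of_mem_verts hT hT'F hv hvT' ▸ hT'

lemma trees_eq_insert : F'.trees = insert Tl {T ∈ F.trees | Disjoint T.verts Tl.verts} := by
  ext T
  by_cases hT : T ∈ F.trees
  · have hTl : T ≠ Tl := fun h => (hd ▸ rfl : Tl ∈ F'.trees \ F.trees).2 (h ▸ hT)
    simp [hT, hTl, mem_trees_iff_disjoint hd hT]
  · have h := Set.ext_iff.mp hd T
    simp only [Set.mem_sdiff, hT, not_false_eq_true, and_true, Set.mem_singleton_iff] at h
    simp [h, hT]

lemma verts_eq_biUnion_sdiff : Tl.verts = ⋃ T ∈ F.trees \ F'.trees, T.verts := by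
  ext v
  simp only [Set.mem_iUnion, Set.mem_sdiff, exists_prop]
  constructor
  · intro hv
    obtain ⟨T, hT, hvT⟩ := F.trees_cover v
    refine ⟨T, ⟨hT, fun hT' => ?_⟩, hvT⟩
    exact Set.disjoint_left.mp ((mem_trees_iff_disjoint hd hT).mp hT') hvT hv
  · rintro ⟨T, ⟨hT, hT'⟩, hvT⟩
    obtain ⟨T', hT'', hvT'⟩ := F'.trees_cover v
    by_cases hT'F : T' ∈ F.trees
    · exact absurd (F.eq_of_mem_verts hT'F hT hvT' hvT ▸ hT'') hT'
    · have hT'l : T' = Tl := by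
        rw [← Set.mem_singleton_iff, ← hd]
        exact ⟨hT'', hT'F⟩
      exact hT'l ▸ hvT'

lemma eq_of_sdiff_eq_singleton {F'' : ForestPlan G s} (hd' : F''.trees \ F.trees = {Tl}) :
    F' = F'' :=
  ext <| by rw [trees_eq_insert hd, trees_eq_insert hd']

end OneNewTree

lemma exists_pair_of_sdiff_eq_singleton [Finite V] {F : ForestPlan G r}
    {F' : ForestPlan G (r - 1)} {Tl : G.Subgraph} (hd : F'.trees \ F.trees = {Tl}) :
    ∃ Tk ∈ F.trees, ∃ Tk' ∈ F.trees, Tk ≠ Tk' ∧ Tl.verts = Tk.verts ∪ Tk'.verts := by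
  have h' := Set.ncard_inter_add_ncard_sdiff_eq_ncard F'.trees F.trees
  have h := Set.ncard_inter_add_ncard_sdiff_eq_ncard F.trees F'.trees
  rw [hd, Set.ncard_singleton, F'.ncard_trees] at h'
  rw [Set.inter_comm, F.ncard_trees] at h
  have h2 : (F.trees \ F'.trees).ncard = 2 := by omega
  obtain ⟨Tk, Tk', hne, hpair⟩ := Set.ncard_eq_two.mp h2
  have hmem : ∀ T ∈ ({Tk, Tk'} : Set G.Subgraph), T ∈ F.trees := fun T hT => (hpair ▸ hT).1
  refine ⟨Tk, hmem Tk (by simp), Tk', hmem Tk' (by simp), hne, ?_⟩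
  rw [verts_eq_biUnion_sdiff hd, hpair, Set.biUnion_pair]

section Merge

variable (F : ForestPlan G r) {Tk Tk' : G.Subgraph} (hk : Tk ∈ F.trees) (hk' : Tk' ∈ F.trees)
  (hne : Tk ≠ Tk') {Tl : G.Subgraph} (hTl : Tl.verts = Tk.verts ∪ Tk'.verts)

include hk hk' hne hTl in
lemma notMem_trees_of_verts_eq_union : Tl ∉ F.trees := by
  intro hmem
  obtain ⟨a, ha⟩ := F.verts_nonempty hk
  obtain ⟨b, hb⟩ := F.verts_nonempty hk'
  have hlk : Tl = Tk := F.eq_of_mem_verts hmem hk (hTl ▸ Or.inl ha) ha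
  have hb' : b ∈ Tk.verts := hlk ▸ hTl ▸ Or.inr hb
  exact Set.disjoint_left.mp (F.trees_disjoint Tk hk Tk' hk' hne) hb' hb

include hk hk' hTl in
lemma disjoint_of_mem_sdiff_pair {T : G.Subgraph} (hT : T ∈ F.trees \ {Tk, Tk'}) :
    Disjoint Tl.verts T.verts := by
  simp only [Set.mem_sdiff, Set.mem_insert_iff, Set.mem_singleton_iff, not_or] at hT
  rw [hTl, Set.disjoint_union_left]
  exact ⟨F.trees_disjoint Tk hk T hT.1 (Ne.symm hT.2.1),
    F.trees_disjoint Tk' hk' T hT.1 (Ne.symm hT.2.2)⟩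

variable [Finite V]

def merge (htree : Tl.coe.IsTree) : ForestPlan G (r - 1) where
  trees := insert Tl (F.trees \ {Tk, Tk'})
  ncard_trees := by
    have hsub : ({Tk, Tk'} : Set G.Subgraph) ⊆ F.trees := Set.pair_subset hk hk'
    have h2 := Set.ncard_le_ncard hsub
    rw [Set.ncard_pair hne, F.ncard_trees] at h2
    rw [Set.ncard_insert_of_notMem (fun h => F.notMem_trees_of_verts_eq_union hk hk' hne hTl h.1),
      Set.ncard_sdiff hsub, Set.ncard_pair hne, F.ncard_trees]
    omega
  isTree := by
    rintro T (rfl | hT)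
    exacts [htree, F.isTree T hT.1]
  trees_disjoint := by
    rintro T (rfl | hT) T' (rfl | hT') hTT'
    · exact absurd rfl hTT'
    · exact F.disjoint_of_mem_sdiff_pair hk hk' hTl hT'
    · exact (F.disjoint_of_mem_sdiff_pair hk hk' hTl hT).symm
    · exact F.trees_disjoint T hT.1 T' hT'.1 hTT'
  trees_cover := by
    intro v
    obtain ⟨T, hT, hv⟩ := F.trees_cover v
    by_cases hpair : T ∈ ({Tk, Tk'} : Set G.Subgraph)
    · rcases hpair with rfl | rfl
      exacts [⟨Tl, .inl rfl, hTl ▸ Or.inl hv⟩, ⟨Tl, .inl rfl, hTl ▸ Or.inr hv⟩]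
    · exact ⟨T, .inr ⟨hT, hpair⟩, hv⟩

lemma merge_trees_sdiff (htree : Tl.coe.IsTree) :
    (F.merge hk hk' hne hTl htree).trees \ F.trees = {Tl} := by
  have hTl' := F.notMem_trees_of_verts_eq_union hk hk' hne hTl
  ext T
  simp only [merge, Set.mem_sdiff, Set.mem_insert_iff, Set.mem_singleton_iff]
  constructor
  · rintro ⟨h | h, hT⟩
    exacts [h, absurd h.1 hT]
  · rintro rfl
    exact ⟨.inl rfl, hTl'⟩

end Merge

end ForestPlan

lemma ForestAncestor.sdiff_eq_singleton {r : ℕ} {Fp : ForestPlan G (r - 1)} {Fr : ForestPlan G r}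
    (h : ForestAncestor G Fp Fr) {Tl : G.Subgraph} (hTl : Tl ∈ Fp.trees \ Fr.trees) :
    Fp.trees \ Fr.trees = {Tl} := by
  obtain ⟨T, hT⟩ := Set.ncard_eq_one.mp h
  rw [hT] at hTl ⊢
  rw [Set.mem_singleton_iff.mp hTl]

lemma forestAncestor_of_sdiff_eq_singleton {r : ℕ} {Fp : ForestPlan G (r - 1)}
    {Fr : ForestPlan G r} {Tl : G.Subgraph} (hd : Fp.trees \ Fr.trees = {Tl}) :
    ForestAncestor G Fp Fr ∧ Tl ∈ Fp.trees \ Fr.trees :=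
  ⟨by rw [ForestAncestor, hd, Set.ncard_singleton], hd ▸ rfl⟩

lemma ForestPlan.ncard_forestAncestor_old_verts_eq_tau [Finite V] {r : ℕ} (Fr : ForestPlan G r)
    {Tk Tk' : G.Subgraph} (hk : Tk ∈ Fr.trees) (hk' : Tk' ∈ Fr.trees) (hne : Tk ≠ Tk') :
    {Fp : ForestPlan G (r - 1) | ForestAncestor G Fp Fr ∧
        ∃ Tl ∈ Fp.trees \ Fr.trees, Tl.verts = Tk.verts ∪ Tk'.verts}.ncard
      = tau G (ind G (Tk.verts ∪ Tk'.verts)) := by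
  symm
  refine Set.ncard_congr (fun T hT => Fr.merge hk hk' hne (isSpanningTreeOf_ind_iff.1 hT).1
    (isSpanningTreeOf_ind_iff.1 hT).2) ?_ ?_ ?_
  · intro T hT
    obtain ⟨hv, htree⟩ := isSpanningTreeOf_ind_iff.1 hT
    obtain ⟨hA, hTnew⟩ :=
      forestAncestor_of_sdiff_eq_singleton (Fr.merge_trees_sdiff hk hk' hne hv htree)
    exact ⟨hA, T, hTnew, hv⟩
  · intro T T' _ _ h
    have h' := congrArg (fun F => F.trees \ Fr.trees) h
    simpa only [ForestPlan.merge_trees_sdiff, Set.singleton_eq_singleton_iff] using h'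
  · rintro Fp ⟨hA, Tl, hTl, hv⟩
    refine ⟨Tl, isSpanningTreeOf_ind_iff.2 ⟨hv, Fp.isTree Tl hTl.1⟩, ?_⟩
    exact Fr.eq_of_sdiff_eq_singleton (ForestPlan.merge_trees_sdiff ..)
      (hA.sdiff_eq_singleton hTl)

end Redist

namespace Redist

variable {V : Type*} [Fintype V] [DecidableEq V]

theorem stmt_13_general (G : SimpleGraph V) (r : ℕ) (Fr : ForestPlan G r) :
    -- the old tree of every ancestor is a spanning tree of a merged adjacent pair
    (∀ Fp : ForestPlan G (r - 1), ForestAncestor G Fp Fr →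
      ∀ Tl ∈ Fp.trees \ Fr.trees,
        ∃ Tk ∈ Fr.trees, ∃ Tk' ∈ Fr.trees, Tk ≠ Tk' ∧
          (crossEdges G Tk.verts Tk'.verts).Nonempty ∧
          IsSpanningTreeOf G Tl (ind G (Tk.verts ∪ Tk'.verts))) ∧
    -- injectivity
    (∀ Fp Fp' : ForestPlan G (r - 1), ForestAncestor G Fp Fr → ForestAncestor G Fp' Fr →
      ∀ Tl ∈ Fp.trees \ Fr.trees, ∀ Tl' ∈ Fp'.trees \ Fr.trees, Tl = Tl' → Fp = Fp') ∧
    -- surjectivity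
    (∀ Tk ∈ Fr.trees, ∀ Tk' ∈ Fr.trees, Tk ≠ Tk' →
      (crossEdges G Tk.verts Tk'.verts).Nonempty →
      ∀ Tl : G.Subgraph, IsSpanningTreeOf G Tl (ind G (Tk.verts ∪ Tk'.verts)) →
        ∃ Fp : ForestPlan G (r - 1), ForestAncestor G Fp Fr ∧ Tl ∈ Fp.trees \ Fr.trees) ∧
    -- the count for each adjacent pair
    (∀ Tk ∈ Fr.trees, ∀ Tk' ∈ Fr.trees, Tk ≠ Tk' →
      (crossEdges G Tk.verts Tk'.verts).Nonempty →
      {Fp : ForestPlan G (r - 1) | ForestAncestor G Fp Fr ∧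
          ∃ Tl ∈ Fp.trees \ Fr.trees, Tl.verts = Tk.verts ∪ Tk'.verts}.ncard
        = tau G (ind G (Tk.verts ∪ Tk'.verts))) := by
  refine ⟨?_, ?_, ?_, ?_⟩
  · intro Fp hA Tl hTl
    obtain ⟨Tk, hk, Tk', hk', hne, hv⟩ :=
      ForestPlan.exists_pair_of_sdiff_eq_singleton (hA.sdiff_eq_singleton hTl)
    obtain ⟨a, ha⟩ := Fr.verts_nonempty hk
    obtain ⟨b, hb⟩ := Fr.verts_nonempty hk'
    have hba : b ∉ Tk.verts := Set.disjoint_right.mp (Fr.trees_disjoint Tk hk Tk' hk' hne) hb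
    refine ⟨Tk, hk, Tk', hk', hne, ?_, isSpanningTreeOf_ind_iff.2 ⟨hv, Fp.isTree Tl hTl.1⟩⟩
    exact crossEdges_nonempty_of_preconnected (Fp.isTree Tl hTl.1).connected.preconnected
      hv.le (hv ▸ Or.inl ha) ha (hv ▸ Or.inr hb) hba
  · rintro Fp Fp' hA hA' Tl hTl _ hTl' rfl
    exact Fr.eq_of_sdiff_eq_singleton (hA.sdiff_eq_singleton hTl) (hA'.sdiff_eq_singleton hTl')
  · intro Tk hk Tk' hk' hne _ Tl hTl
    obtain ⟨hv, htree⟩ := isSpanningTreeOf_ind_iff.1 hTl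
    exact ⟨_, forestAncestor_of_sdiff_eq_singleton (Fr.merge_trees_sdiff hk hk' hne hv htree)⟩
  · intro Tk hk Tk' hk' hne _
    exact Fr.ncard_forestAncestor_old_verts_eq_tau hk hk' hne

/-- The map sending `Fp ∈ A₁(Fr)` to its old tree is a bijection onto the
set of trees `T_ℓ` that are spanning trees of `G[V(T_k) ∪ V(T_{k'})]` for some unordered
pair of adjacent trees of `Fr`; in particular each such pair accounts for exactly
`τ(G[V(T_k) ∪ V(T_{k'})])` ancestors. -/
theorem stmt_13 (G : SimpleGraph V) (r : ℕ) (hr : 1 < r) (Fr : ForestPlan G r) :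
    -- the old tree of every ancestor is a spanning tree of a merged adjacent pair
    (∀ Fp : ForestPlan G (r - 1), ForestAncestor G Fp Fr →
      ∀ Tl ∈ Fp.trees \ Fr.trees,
        ∃ Tk ∈ Fr.trees, ∃ Tk' ∈ Fr.trees, Tk ≠ Tk' ∧
          (crossEdges G Tk.verts Tk'.verts).Nonempty ∧
          IsSpanningTreeOf G Tl (ind G (Tk.verts ∪ Tk'.verts))) ∧
    -- injectivity
    (∀ Fp Fp' : ForestPlan G (r - 1), ForestAncestor G Fp Fr → ForestAncestor G Fp' Fr →
      ∀ Tl ∈ Fp.trees \ Fr.trees, ∀ Tl' ∈ Fp'.trees \ Fr.trees, Tl = Tl' → Fp = Fp') ∧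
    -- surjectivity
    (∀ Tk ∈ Fr.trees, ∀ Tk' ∈ Fr.trees, Tk ≠ Tk' →
      (crossEdges G Tk.verts Tk'.verts).Nonempty →
      ∀ Tl : G.Subgraph, IsSpanningTreeOf G Tl (ind G (Tk.verts ∪ Tk'.verts)) →
        ∃ Fp : ForestPlan G (r - 1), ForestAncestor G Fp Fr ∧ Tl ∈ Fp.trees \ Fr.trees) ∧
    -- the count for each adjacent pair
    (∀ Tk ∈ Fr.trees, ∀ Tk' ∈ Fr.trees, Tk ≠ Tk' →
      (crossEdges G Tk.verts Tk'.verts).Nonempty →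
      {Fp : ForestPlan G (r - 1) | ForestAncestor G Fp Fr ∧
          ∃ Tl ∈ Fp.trees \ Fr.trees, Tl.verts = Tk.verts ∪ Tk'.verts}.ncard
        = tau G (ind G (Tk.verts ∪ Tk'.verts))) :=
  stmt_13_general G r Fr

end Redist
end

section
/- Let G_a = G[V_a] and G_b = G[V_b] be vertex-disjoint, adjacent, hierarchically connected regions of G; let T_a and T_b be η-hierarchical trees on G_a and G_b respectively; let e be an edge of G with endpoint u ∈ V_a and endpoint v ∈ V_b; set x = η(u), y = η(v), U_a = {a ∈ A : V_a ∩ η⁻¹(a) ≠ ∅}, U_b = {a ∈ A : V_b ∩ η⁻¹(a) ≠ ∅}, and T = T_a ∪ {e} ∪ T_b. Then: (1) if x = y and U_a ∩ U_b = {x}, then T is an η-hierarchical tree on G[V_a ∪ V_b]; (2) if x ≠ y and U_a ∩ U_b = ∅, then T is an η-hierarchical tree on G[V_a ∪ V_b]; (3) if |U_a ∩ U_b| > 1, then T is not an η-hierarchical tree on G[V_a ∪ V_b]; (4) if x ≠ y and U_a ∩ U_b ≠ ∅, then T is not an η-hierarchical tree on G[V_a ∪ V_b]. -/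
open SimpleGraph

namespace Redist

variable {V : Type*} [Fintype V] [DecidableEq V]

variable {A : Type*}

/-!
The join `T = T_a ⊔ T_b ⊔ e` is always a spanning tree of `G[V_a ∪ V_b]`: it is connected, and
it has `(|V_a| - 1) + (|V_b| - 1) + 1` edges on `|V_a| + |V_b|` vertices. On a unit meeting only
one of the two regions, `T` restricts to the restriction of `T_a` or of `T_b`. On a unit `a`
meeting both, `e` is the only edge of `T` leaving `V_a`, so the restriction of `T` to `a` is
connected only if `e` lies inside `a`, i.e. `η u = η v = a`; and then that restriction is again
the join of two trees by `e`. So `T` is `η`-hierarchical iff every unit common to both regions is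
`η u = η v`, and the four cases are read off this criterion.
-/

omit [DecidableEq V] in
lemma isTree_coe_iff_connected_and_ncard {G : SimpleGraph V} (T : G.Subgraph) :
    T.coe.IsTree ↔ T.Connected ∧ T.edgeSet.ncard + 1 = T.verts.ncard := by
  rw [isTree_iff_connected_and_card, Subgraph.connected_iff', Nat.card_coe_set_eq,
    ← Subgraph.image_coe_edgeSet_coe,
    Set.ncard_image_of_injective _ (Sym2.map.injective Subtype.val_injective),
    Nat.card_coe_set_eq]

section Join

variable {G : SimpleGraph V} {Va Vb : Set V} {Ta Tb : G.Subgraph} {u v : V}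

omit [Fintype V] [DecidableEq V] in
lemma adj_join_iff_of_mem_left (hTb : Tb ≤ ind G Vb) (hdisj : Disjoint Va Vb) (huv : G.Adj u v)
    (hv : v ∈ Vb) {x y : V} (hx : x ∈ Va) (hy : y ∈ Va) :
    (Ta ⊔ Tb ⊔ G.subgraphOfAdj huv).Adj x y ↔ Ta.Adj x y := by
  refine ⟨fun h => ?_, fun h => Or.inl (Or.inl h)⟩
  rcases h with (h | h) | h
  · exact h
  · exact absurd (hTb.2 h).1 (Set.disjoint_left.mp hdisj hx)
  · rcases Sym2.eq_iff.mp h with ⟨-, rfl⟩ | ⟨-, rfl⟩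
    all_goals exact absurd hv (Set.disjoint_left.mp hdisj ‹_›)

omit [Fintype V] [DecidableEq V] in
lemma adj_join_iff_of_mem_right (hTa : Ta ≤ ind G Va) (hdisj : Disjoint Va Vb) (huv : G.Adj u v)
    (hu : u ∈ Va) {x y : V} (hx : x ∈ Vb) (hy : y ∈ Vb) :
    (Ta ⊔ Tb ⊔ G.subgraphOfAdj huv).Adj x y ↔ Tb.Adj x y := by
  refine ⟨fun h => ?_, fun h => Or.inl (Or.inr h)⟩
  rcases h with (h | h) | h
  · exact absurd hx (Set.disjoint_left.mp hdisj (hTa.2 h).1)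
  · exact h
  · rcases Sym2.eq_iff.mp h with ⟨rfl, -⟩ | ⟨rfl, -⟩
    all_goals exact absurd ‹_› (Set.disjoint_left.mp hdisj hu)

omit [Fintype V] [DecidableEq V] in
lemma eq_of_adj_join_of_mem_of_notMem (hTa : Ta ≤ ind G Va) (hTb : Tb ≤ ind G Vb)
    (hdisj : Disjoint Va Vb) (huv : G.Adj u v) (hu : u ∈ Va) {x y : V}
    (h : (Ta ⊔ Tb ⊔ G.subgraphOfAdj huv).Adj x y) (hx : x ∈ Va) (hy : y ∉ Va) :
    x = u ∧ y = v := by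
  rcases h with (h | h) | h
  · exact absurd (hTa.2 h).2.1 hy
  · exact absurd (hTb.2 h).1 (Set.disjoint_left.mp hdisj hx)
  · rcases Sym2.eq_iff.mp h with ⟨rfl, rfl⟩ | ⟨rfl, -⟩
    · exact ⟨rfl, rfl⟩
    · exact absurd hu hy

omit [DecidableEq V] in
lemma IsSpanningTreeOf.join (hdisj : Disjoint Va Vb) (huv : G.Adj u v) (hu : u ∈ Va)
    (hv : v ∈ Vb) (hTa : IsSpanningTreeOf G Ta (ind G Va))
    (hTb : IsSpanningTreeOf G Tb (ind G Vb)) :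
    IsSpanningTreeOf G (Ta ⊔ Tb ⊔ G.subgraphOfAdj huv) (ind G (Va ∪ Vb)) := by
  obtain ⟨hTaV, hvertsA : Ta.verts = Va, htreeA⟩ := hTa
  obtain ⟨hTbV, hvertsB : Tb.verts = Vb, htreeB⟩ := hTb
  rw [isTree_coe_iff_connected_and_ncard] at htreeA htreeB
  obtain ⟨hconnA, hcardA⟩ := htreeA
  obtain ⟨hconnB, hcardB⟩ := htreeB
  have huv_mem : ({u, v} : Set V) ⊆ Va ∪ Vb :=
    Set.insert_subset (Or.inl hu) (Set.singleton_subset_iff.mpr (Or.inr hv))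
  have hverts : (Ta ⊔ Tb ⊔ G.subgraphOfAdj huv).verts = Va ∪ Vb := by
    simp only [Subgraph.verts_sup, hvertsA, hvertsB, subgraphOfAdj_verts]
    exact Set.union_eq_left.mpr huv_mem
  have hle : Ta ⊔ Tb ⊔ G.subgraphOfAdj huv ≤ ind G (Va ∪ Vb) :=
    sup_le (sup_le (hTaV.trans (Subgraph.induce_mono_right Set.subset_union_left))
      (hTbV.trans (Subgraph.induce_mono_right Set.subset_union_right)))
      ((subgraphOfAdj_le_iff huv _).mpr ⟨Or.inl hu, Or.inr hv, huv⟩)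
  have hconn : (Ta ⊔ Tb ⊔ G.subgraphOfAdj huv).Connected := by
    rw [sup_right_comm]
    have hconnAe := Subgraph.connected_sup hconnA.preconnected
      (Subgraph.subgraphOfAdj_connected huv).preconnected ⟨u, hvertsA ▸ hu, by simp⟩
    exact Subgraph.connected_sup hconnAe.preconnected hconnB.preconnected
      ⟨v, Or.inr (by simp), hvertsB ▸ hv⟩
  have hedges : (Ta ⊔ Tb ⊔ G.subgraphOfAdj huv).edgeSet.ncard =
      Ta.edgeSet.ncard + Tb.edgeSet.ncard + 1 := by
    have hAB : Disjoint Ta.edgeSet Tb.edgeSet := Set.disjoint_left.mpr fun e heA heB =>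
      Set.disjoint_left.mp hdisj (hvertsA ▸ Ta.mem_verts_of_mem_edge heA (Sym2.out_fst_mem e))
        (hvertsB ▸ Tb.mem_verts_of_mem_edge heB (Sym2.out_fst_mem e))
    have hABe : s(u, v) ∉ Ta.edgeSet ∪ Tb.edgeSet := by
      rintro (h | h)
      · exact Set.disjoint_left.mp hdisj
          (hvertsA ▸ Ta.mem_verts_of_mem_edge h (Sym2.mem_mk_right u v)) hv
      · exact Set.disjoint_left.mp hdisj hu
          (hvertsB ▸ Tb.mem_verts_of_mem_edge h (Sym2.mem_mk_left u v))
    rw [Subgraph.edgeSet_sup, Subgraph.edgeSet_sup, edgeSet_subgraphOfAdj,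
      Set.ncard_union_eq (Set.disjoint_singleton_right.mpr hABe), Set.ncard_union_eq hAB,
      Set.ncard_singleton]
  refine ⟨hle, hverts, (isTree_coe_iff_connected_and_ncard _).mpr ⟨hconn, ?_⟩⟩
  rw [hedges, hverts, Set.ncard_union_eq hdisj, ← hvertsA, ← hvertsB]
  omega

omit [Fintype V] [DecidableEq V] in
lemma induce_join_eq_left (hTb : Tb ≤ ind G Vb) (hdisj : Disjoint Va Vb) (huv : G.Adj u v)
    (hv : v ∈ Vb) {S : Set V} (hS : S ⊆ Va) :
    (Ta ⊔ Tb ⊔ G.subgraphOfAdj huv).induce S = Ta.induce S :=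
  Subgraph.ext rfl <| by
    ext x y
    exact and_congr_right fun hx => and_congr_right fun hy =>
      adj_join_iff_of_mem_left hTb hdisj huv hv (hS hx) (hS hy)

omit [Fintype V] [DecidableEq V] in
lemma induce_join_eq_right (hTa : Ta ≤ ind G Va) (hdisj : Disjoint Va Vb) (huv : G.Adj u v)
    (hu : u ∈ Va) {S : Set V} (hS : S ⊆ Vb) :
    (Ta ⊔ Tb ⊔ G.subgraphOfAdj huv).induce S = Tb.induce S :=
  Subgraph.ext rfl <| by
    ext x y
    exact and_congr_right fun hx => and_congr_right fun hy =>
      adj_join_iff_of_mem_right hTa hdisj huv hu (hS hx) (hS hy)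

omit [Fintype V] [DecidableEq V] in
lemma induce_join_eq (hTa : Ta ≤ ind G Va) (hTb : Tb ≤ ind G Vb) (hdisj : Disjoint Va Vb)
    (huv : G.Adj u v) {Sa Sb : Set V} (hSa : Sa ⊆ Va) (hSb : Sb ⊆ Vb) (hu : u ∈ Sa)
    (hv : v ∈ Sb) :
    (Ta ⊔ Tb ⊔ G.subgraphOfAdj huv).induce (Sa ∪ Sb) =
      Ta.induce Sa ⊔ Tb.induce Sb ⊔ G.subgraphOfAdj huv := by
  have hA : ∀ {x y}, Ta.Adj x y → x ∈ Va ∧ y ∈ Va ∧ G.Adj x y := fun h => hTa.2 h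
  have hB : ∀ {x y}, Tb.Adj x y → x ∈ Vb ∧ y ∈ Vb ∧ G.Adj x y := fun h => hTb.2 h
  refine Subgraph.ext ?_ ?_
  · simp only [Subgraph.induce_verts, Subgraph.verts_sup, subgraphOfAdj_verts]
    grind
  · ext x y
    simp only [Subgraph.induce_adj, Subgraph.sup_adj, subgraphOfAdj_adj, Sym2.eq_iff]
    grind

omit [DecidableEq V] in
lemma isHierTree_join (η : V → A) (hdisj : Disjoint Va Vb) (huv : G.Adj u v) (hu : u ∈ Va)
    (hv : v ∈ Vb) (hTa : IsHierTree G η Ta Va) (hTb : IsHierTree G η Tb Vb)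
    (hunits : ∀ a ∈ unitSet η Va ∩ unitSet η Vb, η u = a ∧ η v = a) :
    IsHierTree G η (Ta ⊔ Tb ⊔ G.subgraphOfAdj huv) (Va ∪ Vb) := by
  refine ⟨hTa.1.join hdisj huv hu hv hTb.1, fun a ha => ?_⟩
  rw [Set.union_inter_distrib_right] at ha ⊢
  by_cases hb : (Vb ∩ η ⁻¹' {a}).Nonempty
  · by_cases ha' : (Va ∩ η ⁻¹' {a}).Nonempty
    · obtain ⟨rfl, hva⟩ := hunits a ⟨ha', hb⟩
      have hua : u ∈ Va ∩ η ⁻¹' {η u} := ⟨hu, rfl⟩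
      have hvb : v ∈ Vb ∩ η ⁻¹' {η u} := ⟨hv, hva⟩
      rw [induce_join_eq hTa.1.1 hTb.1.1 hdisj huv Set.inter_subset_left Set.inter_subset_left
        hua hvb]
      exact (hTa.2 _ ha').join (hdisj.mono Set.inter_subset_left Set.inter_subset_left) huv
        hua hvb (hTb.2 _ hb)
    · rw [Set.not_nonempty_iff_eq_empty.mp ha', Set.empty_union,
        induce_join_eq_right hTa.1.1 hdisj huv hu Set.inter_subset_left]
      exact hTb.2 a hb
  · rw [Set.not_nonempty_iff_eq_empty.mp hb, Set.union_empty] at ha ⊢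
    rw [induce_join_eq_left hTb.1.1 hdisj huv hv Set.inter_subset_left]
    exact hTa.2 a ha

omit [Fintype V] [DecidableEq V] in
lemma not_isHierTree_join (η : V → A) (hdisj : Disjoint Va Vb) (huv : G.Adj u v) (hu : u ∈ Va)
    (hTa : Ta ≤ ind G Va) (hTb : Tb ≤ ind G Vb) {a : A}
    (ha : a ∈ unitSet η Va ∩ unitSet η Vb) (hne : ¬(η u = a ∧ η v = a)) :
    ¬IsHierTree G η (Ta ⊔ Tb ⊔ G.subgraphOfAdj huv) (Va ∪ Vb) := by
  rintro ⟨-, hunit⟩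
  obtain ⟨⟨p, hpa, hp⟩, ⟨q, hqb, hq⟩⟩ := ha
  have hpS : p ∈ (Va ∪ Vb) ∩ η ⁻¹' {a} := ⟨Or.inl hpa, hp⟩
  have hqS : q ∈ (Va ∪ Vb) ∩ η ⁻¹' {a} := ⟨Or.inr hqb, hq⟩
  obtain ⟨-, -, htree⟩ := hunit a ⟨p, hpS⟩
  obtain ⟨w⟩ := htree.connected.preconnected ⟨p, hpS⟩ ⟨q, hqS⟩
  obtain ⟨d, -, hx, hy⟩ := w.exists_boundary_dart {x | x.1 ∈ Va} hpa
    (Set.disjoint_right.mp hdisj hqb)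
  obtain ⟨hxS, hyS, hadj⟩ := d.adj
  obtain ⟨hxu, hyv⟩ := eq_of_adj_join_of_mem_of_notMem hTa hTb hdisj huv hu hadj hx hy
  exact hne ⟨hxu ▸ hxS.2, hyv ▸ hyS.2⟩

omit [DecidableEq V] in
lemma isHierTree_join_iff (η : V → A) (hdisj : Disjoint Va Vb) (huv : G.Adj u v) (hu : u ∈ Va)
    (hv : v ∈ Vb) (hTa : IsHierTree G η Ta Va) (hTb : IsHierTree G η Tb Vb) :
    IsHierTree G η (Ta ⊔ Tb ⊔ G.subgraphOfAdj huv) (Va ∪ Vb) ↔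
      ∀ a ∈ unitSet η Va ∩ unitSet η Vb, η u = a ∧ η v = a :=
  ⟨fun h _ ha => by_contra fun hne =>
      not_isHierTree_join η hdisj huv hu hTa.1.1 hTb.1.1 ha hne h,
    isHierTree_join η hdisj huv hu hv hTa hTb⟩

end Join

theorem stmt_15_general {A : Type*} (G : SimpleGraph V) (η : V → A)
    (Va Vb : Set V)
    (hdisj : Disjoint Va Vb)
    (Ta Tb : G.Subgraph) (hTa : IsHierTree G η Ta Va) (hTb : IsHierTree G η Tb Vb)
    (u v : V) (huv : G.Adj u v) (hu : u ∈ Va) (hv : v ∈ Vb) :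
    (η u = η v ∧ unitSet η Va ∩ unitSet η Vb = {η u} →
      IsHierTree G η (Ta ⊔ Tb ⊔ G.subgraphOfAdj huv) (Va ∪ Vb)) ∧
    (η u ≠ η v ∧ unitSet η Va ∩ unitSet η Vb = ∅ →
      IsHierTree G η (Ta ⊔ Tb ⊔ G.subgraphOfAdj huv) (Va ∪ Vb)) ∧
    (1 < (unitSet η Va ∩ unitSet η Vb).ncard →
      ¬IsHierTree G η (Ta ⊔ Tb ⊔ G.subgraphOfAdj huv) (Va ∪ Vb)) ∧
    (η u ≠ η v ∧ (unitSet η Va ∩ unitSet η Vb).Nonempty →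
      ¬IsHierTree G η (Ta ⊔ Tb ⊔ G.subgraphOfAdj huv) (Va ∪ Vb)) := by
  rw [isHierTree_join_iff η hdisj huv hu hv hTa hTb]
  refine ⟨fun ⟨hxy, hU⟩ a ha => ?_, fun ⟨_, hU⟩ a ha => ?_, fun hcard h => ?_,
    fun ⟨hxy, a, ha⟩ h => hxy ((h a ha).1.trans (h a ha).2.symm)⟩
  · rw [hU, Set.mem_singleton_iff] at ha
    exact ⟨ha.symm, hxy.symm.trans ha.symm⟩
  · rw [hU] at ha
    exact ha.elim
  · obtain ⟨a, ha, b, hb, hab⟩ :=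
      (Set.one_lt_ncard (Set.finite_of_ncard_pos (by omega))).mp hcard
    exact hab ((h a ha).1.symm.trans (h b hb).1)

/-- Joining hierarchical trees on two disjoint, adjacent, hierarchically
connected regions by an edge `e = (u, v)`: with `x = η u`, `y = η v`, and `U_a, U_b` the
administrative units meeting each region, the join `T = T_a ∪ {e} ∪ T_b` is a
hierarchical tree on the merged region in cases (1) `x = y` and `U_a ∩ U_b = {x}`,
(2) `x ≠ y` and `U_a ∩ U_b = ∅`; and it is not in cases (3) `|U_a ∩ U_b| > 1`,
(4) `x ≠ y` and `U_a ∩ U_b ≠ ∅`. -/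
theorem stmt_15 {A : Type*} [Fintype A] (G : SimpleGraph V) (η : V → A)
    (Va Vb : Set V) (hna : Va.Nonempty) (hnb : Vb.Nonempty)
    (hca : (ind G Va).Connected) (hcb : (ind G Vb).Connected)
    (hdisj : Disjoint Va Vb) (hadj : (crossEdges G Va Vb).Nonempty)
    (hha : HierConnectedBlock G η Va) (hhb : HierConnectedBlock G η Vb)
    (Ta Tb : G.Subgraph) (hTa : IsHierTree G η Ta Va) (hTb : IsHierTree G η Tb Vb)
    (u v : V) (huv : G.Adj u v) (hu : u ∈ Va) (hv : v ∈ Vb) :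
    (η u = η v ∧ unitSet η Va ∩ unitSet η Vb = {η u} →
      IsHierTree G η (Ta ⊔ Tb ⊔ G.subgraphOfAdj huv) (Va ∪ Vb)) ∧
    (η u ≠ η v ∧ unitSet η Va ∩ unitSet η Vb = ∅ →
      IsHierTree G η (Ta ⊔ Tb ⊔ G.subgraphOfAdj huv) (Va ∪ Vb)) ∧
    (1 < (unitSet η Va ∩ unitSet η Vb).ncard →
      ¬IsHierTree G η (Ta ⊔ Tb ⊔ G.subgraphOfAdj huv) (Va ∪ Vb)) ∧
    (η u ≠ η v ∧ (unitSet η Va ∩ unitSet η Vb).Nonempty →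
      ¬IsHierTree G η (Ta ⊔ Tb ⊔ G.subgraphOfAdj huv) (Va ∪ Vb)) :=
  stmt_15_general G η Va Vb hdisj Ta Tb hTa hTb u v huv hu hv

end Redist
end
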